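/- Every determined atomic L∘-solution is L△-representable: if τ is a BD-satisfiable conjunction of atomic L∘-literals such that for every variable p with ∘p or •p occurring in τ, also p or ¬p occurs in τ, then there exists a conjunction τ' of L△-literals with τ weakly equivalent to τ' (τ ⊨_BD τ' and τ' ⊨_BD τ). -/

import Mathlib

inductive FV | T | B | N | F
deriving DecidableEq

open FV

def fneg : FV → FV
  | T => F | F => T | B => B | N => N

def fand : FV → FV → FV
  | T, x => x
  | x, T => x
  | F, _ => F
  | _, F => F
  | B, B => B
  | N, N => N
  | B, N => F
  | N, B => F

def forr : FV → FV → FV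
  | F, x => x
  | x, F => x
  | T, _ => T
  | _, T => T
  | B, B => B
  | N, N => N
  | B, N => T
  | N, B => T

def fcirc : FV → FV
  | T => T | F => T | B => F | N => F

def ftri : FV → FV
  | T => T | B => T | N => F | F => F

inductive Fm
  | var : ℕ → Fm
  | neg : Fm → Fm
  | conj : Fm → Fm → Fm
  | disj : Fm → Fm → Fm
  | circ : Fm → Fm
  | tri : Fm → Fm

def eval (v : ℕ → FV) : Fm → FV
  | .var p => v p
  | .neg φ => fneg (eval v φ)
  | .conj φ χ => fand (eval v φ) (eval v χ)
  | .disj φ χ => forr (eval v φ) (eval v χ)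
  | .circ φ => fcirc (eval v φ)
  | .tri φ => ftri (eval v φ)

/-- designated values -/
def desig (x : FV) : Prop := x = T ∨ x = B

/-- formulas over {¬,∧,∨} -/
def isBD : Fm → Prop
  | .var _ => True
  | .neg φ => isBD φ
  | .conj φ χ => isBD φ ∧ isBD χ
  | .disj φ χ => isBD φ ∧ isBD χ
  | .circ _ => False
  | .tri _ => False

/-- formulas over {¬,∧,∨,∘} -/
def isCircFm : Fm → Prop
  | .var _ => True
  | .neg φ => isCircFm φ
  | .conj φ χ => isCircFm φ ∧ isCircFm χ
  | .disj φ χ => isCircFm φ ∧ isCircFm χ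
  | .circ φ => isCircFm φ
  | .tri _ => False

/-- formulas over {¬,∧,∨,△} -/
def isTriFm : Fm → Prop
  | .var _ => True
  | .neg φ => isTriFm φ
  | .conj φ χ => isTriFm φ ∧ isTriFm χ
  | .disj φ χ => isTriFm φ ∧ isTriFm χ
  | .circ _ => False
  | .tri φ => isTriFm φ

/-- BD entailment between single formulas -/
def ent (φ χ : Fm) : Prop := ∀ v, desig (eval v φ) → desig (eval v χ)

/-- classical (two-valued) evaluation of {¬,∧,∨}-formulas -/
def evalC (b : ℕ → Bool) : Fm → Bool
  | .var p => b p
  | .neg φ => !(evalC b φ)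
  | .conj φ χ => evalC b φ && evalC b χ
  | .disj φ χ => evalC b φ || evalC b χ
  | .circ φ => evalC b φ
  | .tri φ => evalC b φ


/-- atomic L∘-literals: p, ¬p, ∘p, •p -/
inductive CLit
  | pos : ℕ → CLit
  | negl : ℕ → CLit
  | circ : ℕ → CLit
  | bullet : ℕ → CLit
deriving DecidableEq

def clitEval (v : ℕ → FV) : CLit → FV
  | .pos p => v p
  | .negl p => fneg (v p)
  | .circ p => fcirc (v p)
  | .bullet p => fneg (fcirc (v p))

/-- L△-literals: p, ¬p, △p, ¬△p, △¬p, ¬△¬p -/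
inductive TLit
  | pos : ℕ → TLit
  | negl : ℕ → TLit
  | tp : ℕ → TLit
  | ntp : ℕ → TLit
  | tn : ℕ → TLit
  | ntn : ℕ → TLit
deriving DecidableEq

def tlitEval (v : ℕ → FV) : TLit → FV
  | .pos p => v p
  | .negl p => fneg (v p)
  | .tp p => ftri (v p)
  | .ntp p => fneg (ftri (v p))
  | .tn p => ftri (fneg (v p))
  | .ntn p => fneg (ftri (fneg (v p)))

/-!
The literals `p` and `¬p` are already L△-literals. Once `p` pins the value of `p` to `{T, B}`, or
`¬p` pins it to `{B, F}`, each of `∘p` and `•p` agrees on designation with one L△-literal: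
over `p`, `∘p` is `¬△¬p` and `•p` is `△¬p`; over `¬p`, `∘p` is `¬△p` and `•p` is `△p`.
Determinedness supplies such an anchor in `τ` for every `∘p` or `•p` of `τ`, so replacing each
literal by its counterpart yields an equivalent conjunction of L△-literals.
-/

lemma desig_fcirc_iff_of_desig {x : FV} (hx : desig x) :
    desig (fcirc x) ↔ desig (fneg (ftri (fneg x))) := by
  cases x <;> simp_all [desig, fcirc, fneg, ftri]

lemma desig_fcirc_iff_of_desig_fneg {x : FV} (hx : desig (fneg x)) :
    desig (fcirc x) ↔ desig (fneg (ftri x)) := by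
  cases x <;> simp_all [desig, fcirc, fneg, ftri]

lemma desig_fneg_fcirc_iff_of_desig {x : FV} (hx : desig x) :
    desig (fneg (fcirc x)) ↔ desig (ftri (fneg x)) := by
  cases x <;> simp_all [desig, fcirc, fneg, ftri]

lemma desig_fneg_fcirc_iff_of_desig_fneg {x : FV} (hx : desig (fneg x)) :
    desig (fneg (fcirc x)) ↔ desig (ftri x) := by
  cases x <;> simp_all [desig, fcirc, fneg, ftri]

def CLit.toTLit (τ : List CLit) : CLit → TLit
  | .pos p => .pos p
  | .negl p => .negl p
  | .circ p => if CLit.pos p ∈ τ then .ntn p else .ntp p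
  | .bullet p => if CLit.pos p ∈ τ then .tn p else .tp p

lemma CLit.desig_clitEval_iff_toTLit {τ : List CLit} {v : ℕ → FV}
    (hdet : ∀ p : ℕ, (CLit.circ p ∈ τ ∨ CLit.bullet p ∈ τ) →
      (CLit.pos p ∈ τ ∨ CLit.negl p ∈ τ))
    (hpos : ∀ p, CLit.pos p ∈ τ → desig (v p))
    (hnegl : ∀ p, CLit.negl p ∈ τ → desig (fneg (v p)))
    {l : CLit} (hl : l ∈ τ) :
    desig (clitEval v l) ↔ desig (tlitEval v (l.toTLit τ)) := by
  cases l with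
  | pos p | negl p => rfl
  | circ p =>
    have hanchor := hdet p (Or.inl hl)
    by_cases hp : CLit.pos p ∈ τ
    · simp only [toTLit, if_pos hp]
      exact desig_fcirc_iff_of_desig (hpos p hp)
    · simp only [toTLit, if_neg hp]
      exact desig_fcirc_iff_of_desig_fneg (hnegl p (hanchor.resolve_left hp))
  | bullet p =>
    have hanchor := hdet p (Or.inr hl)
    by_cases hp : CLit.pos p ∈ τ
    · simp only [toTLit, if_pos hp]
      exact desig_fneg_fcirc_iff_of_desig (hpos p hp)
    · simp only [toTLit, if_neg hp]
      exact desig_fneg_fcirc_iff_of_desig_fneg (hnegl p (hanchor.resolve_left hp))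

theorem determined_circ_term_tri_representable_general (τ : List CLit)
    (hdet : ∀ p : ℕ, (CLit.circ p ∈ τ ∨ CLit.bullet p ∈ τ) →
      (CLit.pos p ∈ τ ∨ CLit.negl p ∈ τ)) :
    ∃ τ' : List TLit, ∀ v : ℕ → FV,
      (∀ l ∈ τ, desig (clitEval v l)) ↔ (∀ l ∈ τ', desig (tlitEval v l)) := by
  refine ⟨τ.map (CLit.toTLit τ), fun v => ?_⟩
  rw [List.forall_mem_map]
  constructor
  · intro h l hl
    exact (CLit.desig_clitEval_iff_toTLit (v := v) hdet (fun p => h _) (fun p => h _) hl).1 (h l hl)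
  · intro h l hl
    exact (CLit.desig_clitEval_iff_toTLit (v := v) hdet (fun p => h _) (fun p => h _) hl).2 (h l hl)

theorem determined_circ_term_tri_representable (τ : List CLit)
    (hsat : ∃ v : ℕ → FV, ∀ l ∈ τ, desig (clitEval v l))
    (hdet : ∀ p : ℕ, (CLit.circ p ∈ τ ∨ CLit.bullet p ∈ τ) →
      (CLit.pos p ∈ τ ∨ CLit.negl p ∈ τ)) :
    ∃ τ' : List TLit, ∀ v : ℕ → FV,
      (∀ l ∈ τ, desig (clitEval v l)) ↔ (∀ l ∈ τ', desig (tlitEval v l)) :=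
  determined_circ_term_tri_representable_general τ hdet
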